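/- Let H be a real inner product space, V a (d+1)-dimensional subspace, v₁,…,v_{d+1} ∈ V, and u ∈ V^⊥ with u ≠ 0. Then for every i with 1 ≤ i ≤ d+1, |p_d sin₀(v₁,…,v_{d+1})| ≤ |p_d sin₀(v₁,…,v_{i−1},u,v_{i+1},…,v_{d+1})|, where p_d sin₀ denotes the polar sine (Gram content divided by product of norms, with value 0 when a vector is zero). -/

import Mathlib

open scoped RealInnerProductSpace

/-- The `k`-dimensional content: the square root of the Gram determinant. -/
noncomputable def gramContent {H : Type*} [NormedAddCommGroup H] [InnerProductSpace ℝ H]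
    {k : ℕ} (v : Fin k → H) : ℝ :=
  Real.sqrt (Matrix.det (Matrix.of fun i j => ⟪v i, v j⟫))

/-- The polar sine at the origin (zero if some vector vanishes, since `x / 0 = 0`). -/
noncomputable def polarSin {H : Type*} [NormedAddCommGroup H] [InnerProductSpace ℝ H]
    {k : ℕ} (v : Fin k → H) : ℝ :=
  gramContent v / ∏ j, ‖v j‖

/-!
Subtracting from `v i` its orthogonal projection onto the span of the other vectors is a unimodular
change of the family, so it leaves the Gram determinant unchanged; and when one vector is orthogonal
to all the others the Gram determinant factors as its squared norm times the Gram determinant of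
the rest. Hence the polar sine of `v` is `‖q‖ / ‖v i‖ ≤ 1` times that of the family with `v i`
removed, `q` being the component of `v i` orthogonal to the others, whereas for `u ⊥ V` the factor
is exactly `1`.
-/

namespace Matrix

variable {E : Type*} [NormedAddCommGroup E] [InnerProductSpace ℝ E]
  {m n : Type*} [Fintype n]

theorem gram_sum_smul (A : Matrix m n ℝ) (v : n → E) :
    gram ℝ (fun a => ∑ k, A a k • v k) = A * gram ℝ v * Aᵀ := by
  ext a c
  simp only [gram_apply, sum_inner, inner_sum, real_inner_smul_left, real_inner_smul_right,
    mul_apply, transpose_apply, Finset.sum_mul]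
  exact Finset.sum_congr rfl fun k _ => Finset.sum_congr rfl fun l _ => by ring

variable [DecidableEq n]

theorem det_gram_update_sub_sum_smul (v : n → E) (i : n) (c : n → ℝ) (hc : c i = 0) :
    (gram ℝ (Function.update v i (v i - ∑ k, c k • v k))).det = (gram ℝ v).det := by
  set r : n → ℝ := Pi.single i 1 - c with hr
  let A : Matrix n n ℝ := (1 : Matrix n n ℝ).updateRow i r
  have hA : A.det = 1 := by
    have hrow : r = ∑ k, r k • (1 : Matrix n n ℝ) k := by
      ext j
      simp [one_apply]
    rw [show A = (1 : Matrix n n ℝ).updateRow i r from rfl, hrow, det_updateRow_sum]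
    simp [hr, hc]
  have hv : Function.update v i (v i - ∑ k, c k • v k) = fun a => ∑ k, A a k • v k := by
    ext a
    rcases eq_or_ne a i with rfl | ha
    · simp [A, hr, sub_smul, Finset.sum_sub_distrib]
    · simp [A, ha, one_apply]
  rw [hv, gram_sum_smul, det_mul, det_mul, det_transpose, hA, one_mul, mul_one]

theorem det_gram_update_of_forall_inner_eq_zero {d : ℕ} (v : Fin (d + 1) → E) (i : Fin (d + 1))
    (w : E) (hw : ∀ j ≠ i, ⟪w, v j⟫ = 0) :
    (gram ℝ (Function.update v i w)).det = ‖w‖ ^ 2 * (gram ℝ (v ∘ i.succAbove)).det := by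
  rw [det_succ_row _ i, Finset.sum_eq_single i]
  · have hsub : (gram ℝ (Function.update v i w)).submatrix i.succAbove i.succAbove
        = gram ℝ (v ∘ i.succAbove) := by
      ext a b
      simp [gram_apply]
    rw [hsub, ← two_mul, pow_mul]
    simp [gram_apply]
  · intro j _ hj
    simp [gram_apply, Function.update_of_ne hj, hw j hj]
  · simp

end Matrix

section PolarSine

variable {H : Type*} [NormedAddCommGroup H] [InnerProductSpace ℝ H] {k d : ℕ}

theorem gramContent_eq_sqrt_det_gram (v : Fin k → H) :
    gramContent v = √(Matrix.gram ℝ v).det :=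
  rfl

theorem gramContent_nonneg (v : Fin k → H) : 0 ≤ gramContent v :=
  Real.sqrt_nonneg _

theorem polarSin_nonneg (v : Fin k → H) : 0 ≤ polarSin v :=
  div_nonneg (gramContent_nonneg v) (Finset.prod_nonneg fun _ _ => norm_nonneg _)

theorem gramContent_update_sub_of_mem_span (v : Fin k → H) (i : Fin k) {p : H}
    (hp : p ∈ Submodule.span ℝ (v '' {i}ᶜ)) :
    gramContent (Function.update v i (v i - p)) = gramContent v := by
  obtain ⟨c, hc, rfl⟩ := (Finsupp.mem_span_image_iff_linearCombination ℝ).mp hp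
  have hci : c i = 0 := Finsupp.notMem_support_iff.mp fun h => hc h rfl
  rw [Finsupp.linearCombination_apply,
    Finsupp.sum_fintype c (fun j a => a • v j) fun _ => zero_smul ℝ _,
    gramContent_eq_sqrt_det_gram, gramContent_eq_sqrt_det_gram,
    Matrix.det_gram_update_sub_sum_smul v i c hci]

theorem gramContent_update_of_forall_inner_eq_zero (v : Fin (d + 1) → H) (i : Fin (d + 1))
    {w : H} (hw : ∀ j ≠ i, ⟪w, v j⟫ = 0) :
    gramContent (Function.update v i w) = ‖w‖ * gramContent (v ∘ i.succAbove) := by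
  rw [gramContent_eq_sqrt_det_gram, gramContent_eq_sqrt_det_gram,
    Matrix.det_gram_update_of_forall_inner_eq_zero v i w hw, Real.sqrt_mul (sq_nonneg _),
    Real.sqrt_sq (norm_nonneg _)]

theorem polarSin_update_of_forall_inner_eq_zero (v : Fin (d + 1) → H) (i : Fin (d + 1))
    {w : H} (hw : ∀ j ≠ i, ⟪w, v j⟫ = 0) (hw0 : w ≠ 0) :
    polarSin (Function.update v i w) = polarSin (v ∘ i.succAbove) := by
  have hprod : ∏ j, ‖Function.update v i w j‖ = ‖w‖ * ∏ j, ‖v (i.succAbove j)‖ := by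
    simp [Fin.prod_univ_succAbove _ i]
  rw [polarSin, polarSin, hprod, gramContent_update_of_forall_inner_eq_zero v i hw,
    mul_div_mul_left _ _ (norm_ne_zero_iff.mpr hw0)]
  rfl

theorem gramContent_le_norm_mul_gramContent_succAbove (v : Fin (d + 1) → H) (i : Fin (d + 1)) :
    gramContent v ≤ ‖v i‖ * gramContent (v ∘ i.succAbove) := by
  set S := Submodule.span ℝ (v '' {i}ᶜ)
  have : FiniteDimensional ℝ S := FiniteDimensional.span_of_finite ℝ (Set.toFinite _)
  have hq : v i - S.starProjection (v i) ∈ Sᗮ := S.sub_starProjection_mem_orthogonal (v i)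
  have hq_orth : ∀ j ≠ i, ⟪v i - S.starProjection (v i), v j⟫ = 0 := fun j hj =>
    Submodule.inner_left_of_mem_orthogonal (Submodule.subset_span (Set.mem_image_of_mem v hj))
      hq
  have hq_le : ‖v i - S.starProjection (v i)‖ ≤ ‖v i‖ := by
    rw [← Submodule.starProjection_orthogonal_val]
    exact Sᗮ.norm_starProjection_apply_le (v i)
  calc gramContent v = gramContent (Function.update v i (v i - S.starProjection (v i))) :=
        (gramContent_update_sub_of_mem_span v i (S.starProjection_apply_mem (v i))).symm
    _ = ‖v i - S.starProjection (v i)‖ * gramContent (v ∘ i.succAbove) :=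
        gramContent_update_of_forall_inner_eq_zero v i hq_orth
    _ ≤ ‖v i‖ * gramContent (v ∘ i.succAbove) :=
        mul_le_mul_of_nonneg_right hq_le (gramContent_nonneg _)

theorem polarSin_le_polarSin_comp_succAbove (v : Fin (d + 1) → H) (i : Fin (d + 1)) :
    polarSin v ≤ polarSin (v ∘ i.succAbove) := by
  rcases eq_or_ne (v i) 0 with hvi | hvi
  · have : ∏ j, ‖v j‖ = 0 := Finset.prod_eq_zero (Finset.mem_univ i) (by simp [hvi])
    rw [polarSin, this, div_zero]
    exact polarSin_nonneg _
  calc polarSin v = gramContent v / (‖v i‖ * ∏ j, ‖v (i.succAbove j)‖) := by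
        rw [polarSin, Fin.prod_univ_succAbove _ i]
    _ ≤ ‖v i‖ * gramContent (v ∘ i.succAbove) / (‖v i‖ * ∏ j, ‖v (i.succAbove j)‖) :=
        div_le_div_of_nonneg_right (gramContent_le_norm_mul_gramContent_succAbove v i)
          (by positivity)
    _ = polarSin (v ∘ i.succAbove) :=
        mul_div_mul_left _ _ (norm_ne_zero_iff.mpr hvi)

end PolarSine

theorem polarSin_orth_replacement_general {H : Type*} [NormedAddCommGroup H] [InnerProductSpace ℝ H]
    {d : ℕ} (V : Submodule ℝ H)
    (v : Fin (d + 1) → H) (hv : ∀ i, v i ∈ V)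
    (u : H) (hu : u ∈ Vᗮ) (hu0 : u ≠ 0) :
    ∀ i : Fin (d + 1), polarSin v ≤ polarSin (Function.update v i u) := by
  intro i
  have hu_orth : ∀ j ≠ i, ⟪u, v j⟫ = 0 := fun j _ =>
    Submodule.inner_left_of_mem_orthogonal (hv j) hu
  rw [polarSin_update_of_forall_inner_eq_zero v i hu_orth hu0]
  exact polarSin_le_polarSin_comp_succAbove v i

theorem polarSin_orth_replacement {H : Type*} [NormedAddCommGroup H] [InnerProductSpace ℝ H]
    {d : ℕ} (V : Submodule ℝ H) [FiniteDimensional ℝ V]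
    (hV : Module.finrank ℝ V = d + 1)
    (v : Fin (d + 1) → H) (hv : ∀ i, v i ∈ V)
    (u : H) (hu : u ∈ Vᗮ) (hu0 : u ≠ 0) :
    ∀ i : Fin (d + 1), polarSin v ≤ polarSin (Function.update v i u) :=
  polarSin_orth_replacement_general V v hv u hu hu0
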